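/- Let a_1,...,a_n be positive canonical-form dyadic rational games and b_1,...,b_m negative ones, and let k = Σ l(a_i) − Σ r(b_i). Then the misère outcome of a_1 + ... + a_n + b_1 + ... + b_m is L^- if k < 0, N^- if k = 0, and R^- if k > 0. -/

import Mathlib

universe u

namespace SetTheory

/-- Pre-games, as in the older Mathlib (`SetTheory.PGame`, removed from Mathlib since). -/
inductive PGame : Type (u + 1)
  | mk : ∀ α β : Type u, (α → PGame) → (β → PGame) → PGame

namespace PGame

def LeftMoves : PGame → Type u
  | mk l _ _ _ => l

def RightMoves : PGame → Type u
  | mk _ r _ _ => r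

def moveLeft : ∀ g : PGame, LeftMoves g → PGame
  | mk _l _ L _ => L

def moveRight : ∀ g : PGame, RightMoves g → PGame
  | mk _ _r _ R => R

inductive IsOption : PGame → PGame → Prop
  | moveLeft {x : PGame} (i : x.LeftMoves) : IsOption (x.moveLeft i) x
  | moveRight {x : PGame} (i : x.RightMoves) : IsOption (x.moveRight i) x

instance : Zero PGame :=
  ⟨⟨PEmpty, PEmpty, PEmpty.elim, PEmpty.elim⟩⟩

def neg : PGame → PGame
  | ⟨l, r, L, R⟩ => ⟨r, l, fun i => neg (R i), fun i => neg (L i)⟩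

instance : Neg PGame :=
  ⟨neg⟩

noncomputable instance : Add PGame.{u} :=
  ⟨fun x y => by
    induction x generalizing y with | mk xl xr _ _ IHxl IHxr => _
    induction y with | mk yl yr yL yR IHyl IHyr => _
    have y := mk yl yr yL yR
    refine ⟨xl ⊕ yl, xr ⊕ yr, Sum.rec ?_ ?_, Sum.rec ?_ ?_⟩
    · exact fun i => IHxl i y
    · exact IHyl
    · exact fun i => IHxr i y
    · exact IHyr⟩

end PGame

end SetTheory

open SetTheory

namespace Misere

/-- `F` is a follower of `G`: reachable from `G` by a (possibly empty) sequence of moves. -/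
def Follower (F G : PGame) : Prop := Relation.ReflTransGen PGame.IsOption F G

def IsLeftEnd (G : PGame) : Prop := IsEmpty G.LeftMoves
def IsRightEnd (G : PGame) : Prop := IsEmpty G.RightMoves

/-- A dead left end: every follower (including itself) is a left end. -/
def DeadLeftEnd (G : PGame) : Prop := ∀ F, Follower F G → IsLeftEnd F
def DeadRightEnd (G : PGame) : Prop := ∀ F, Follower F G → IsRightEnd F
def DeadEnd (G : PGame) : Prop := DeadLeftEnd G ∨ DeadRightEnd G

/-- A game is dead-ending if every end follower is a dead end. -/
def DeadEnding (G : PGame) : Prop :=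
  ∀ F, Follower F G → (IsLeftEnd F → DeadLeftEnd F) ∧ (IsRightEnd F → DeadRightEnd F)

/-- The universe of dead-ending games. -/
def E : Set PGame := {G | DeadEnding G}

/-- `(misereWins G).1` : Left, moving first, wins `G` under misère play;
    `(misereWins G).2` : Right, moving first, wins `G` under misère play. -/
def misereWins : PGame → Prop × Prop
  | PGame.mk l r L R =>
      (IsEmpty l ∨ ∃ i, ¬ (misereWins (L i)).2,
       IsEmpty r ∨ ∃ j, ¬ (misereWins (R j)).1)

def LeftWinsGF (G : PGame) : Prop := (misereWins G).1
def RightWinsGF (G : PGame) : Prop := (misereWins G).2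

inductive MOutcome : Type
  | L | N | P | R
deriving DecidableEq

/-- Partial order on misère outcomes: `R` minimal, `L` maximal, `N` and `P` incomparable. -/
def MOutcome.le : MOutcome → MOutcome → Prop
  | .R, _ => True
  | _, .L => True
  | a, b => a = b

instance : LE MOutcome := ⟨MOutcome.le⟩

/-- The misère outcome of a game. -/
noncomputable def outcome (G : PGame) : MOutcome := by
  classical
  exact if LeftWinsGF G then (if RightWinsGF G then .N else .L)
        else (if RightWinsGF G then .R else .P)

/-- `G ≡ H (mod U)`. -/
def equivMod (U : Set PGame) (G H : PGame) : Prop :=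
  ∀ X ∈ U, outcome (G + X) = outcome (H + X)

/-- `G ≧ H (mod U)`. -/
def geMod (U : Set PGame) (G H : PGame) : Prop :=
  ∀ X ∈ U, outcome (H + X) ≤ outcome (G + X)

/-- `LeftChain G n`: there is a sequence of `n` consecutive Left moves from `G`
ending at the zero position. -/
inductive LeftChain : PGame → ℕ → Prop
  | zero (G : PGame) : IsLeftEnd G → IsRightEnd G → LeftChain G 0
  | succ (G : PGame) (i : G.LeftMoves) (n : ℕ) :
      LeftChain (G.moveLeft i) n → LeftChain G (n + 1)

inductive RightChain : PGame → ℕ → Prop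
  | zero (G : PGame) : IsLeftEnd G → IsRightEnd G → RightChain G 0
  | succ (G : PGame) (j : G.RightMoves) (n : ℕ) :
      RightChain (G.moveRight j) n → RightChain G (n + 1)

/-- Left-length: minimum number of consecutive Left moves needed to reach zero. -/
noncomputable def leftLength (G : PGame) : ℕ := sInf {n | LeftChain G n}

/-- Right-length: minimum number of consecutive Right moves needed to reach zero. -/
noncomputable def rightLength (G : PGame) : ℕ := sInf {n | RightChain G n}

/-- Normal-play canonical form of a nonnegative integer. -/
def natGame : ℕ → PGame
  | 0 => 0
  | n + 1 => PGame.mk PUnit PEmpty (fun _ => natGame n) PEmpty.elim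

/-- Normal-play canonical form of an integer (negatives are conjugates). -/
def intGame (n : ℤ) : PGame :=
  if 0 ≤ n then natGame n.toNat else -natGame (-n).toNat

/-- Normal-play canonical form of the dyadic rational `m / 2 ^ j`. -/
def dyadicGame : ℤ → ℕ → PGame
  | m, 0 => intGame m
  | m, j + 1 =>
      if m % 2 = 0 then dyadicGame (m / 2) j
      else PGame.mk PUnit PUnit (fun _ => dyadicGame ((m - 1) / 2) j)
            (fun _ => dyadicGame ((m + 1) / 2) j)

/-- The closure of dead ends: finite disjunctive sums of dead ends. -/
def DeadEndClosure : Set PGame :=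
  {G | ∃ l : List PGame, (∀ x ∈ l, DeadEnd x) ∧ G = l.sum}

end Misere

/-!
In a positive dyadic number `a`, every Left move lowers `l(a)` by exactly one, and every Right
move leads to a positive number of left-length at most `l(a)`; dually for negative numbers. So a
sum behaves like a race in which Left needs `p = Σ l(aᵢ)` moves and Right needs `q = Σ r(bⱼ)`
moves to run out: a move in one's own components can spend one unit of one's budget, and a move
in the opponent's leaves the opponent's budget nonzero and no larger. In misère play the player
who runs out first wins, so Left moving first wins iff `p ≤ q`, and Right moving first iff
`q ≤ p`.
-/

namespace SetTheory.PGame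

theorem neg_mk (xl xr : Type u) (xL : xl → PGame) (xR : xr → PGame) :
    -(mk xl xr xL xR) = mk xr xl (fun j => -xR j) (fun i => -xL i) :=
  rfl

protected theorem neg_zero : -(0 : PGame.{u}) = 0 := by
  change neg (mk PEmpty PEmpty PEmpty.elim PEmpty.elim) = mk PEmpty PEmpty PEmpty.elim PEmpty.elim
  rw [neg]
  congr 1 <;> funext i <;> exact i.elim

end SetTheory.PGame

namespace Misere

open PGame

theorem leftWinsGF_iff (G : PGame) :
    LeftWinsGF G ↔ IsEmpty G.LeftMoves ∨ ∃ i, ¬RightWinsGF (G.moveLeft i) := by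
  cases G; rfl

theorem rightWinsGF_iff (G : PGame) :
    RightWinsGF G ↔ IsEmpty G.RightMoves ∨ ∃ j, ¬LeftWinsGF (G.moveRight j) := by
  cases G; rfl

/-- A move by a player with budget `a` against an opponent with budget `b`, leading to budgets
`a'` and `b'`: either the mover spends one unit of their own budget, or moves in one of the
opponent's components, which leaves the opponent a nonzero budget no larger than `b`. -/
def RaceStep (a b a' b' : ℕ) : Prop :=
  a' + 1 = a ∧ b' = b ∨ a' = a ∧ 0 < b' ∧ b' ≤ b

theorem RaceStep.add_right {a b a' b' : ℕ} (h : RaceStep a b a' b') (c d : ℕ) :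
    RaceStep (a + c) (b + d) (a' + c) (b' + d) := by
  unfold RaceStep at *; omega

theorem RaceStep.add_left {a b a' b' : ℕ} (h : RaceStep a b a' b') (c d : ℕ) :
    RaceStep (c + a) (d + b) (c + a') (d + b') := by
  unfold RaceStep at *; omega

/-- `p` and `q` are the numbers of moves Left and Right need to run out of moves in their own
components; a player with a nonzero budget can always spend one unit of it. -/
def IsRace : PGame → ℕ → ℕ → Prop
  | PGame.mk _ _ L R, p, q =>
      (∀ i, ∃ p' q', RaceStep p q p' q' ∧ IsRace (L i) p' q') ∧
      (∀ j, ∃ p' q', RaceStep q p q' p' ∧ IsRace (R j) p' q') ∧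
      (0 < p → ∃ i, IsRace (L i) (p - 1) q) ∧
      (0 < q → ∃ j, IsRace (R j) p (q - 1))

theorem isRace_iff {G : PGame} {p q : ℕ} : IsRace G p q ↔
    (∀ i, ∃ p' q', RaceStep p q p' q' ∧ IsRace (G.moveLeft i) p' q') ∧
    (∀ j, ∃ p' q', RaceStep q p q' p' ∧ IsRace (G.moveRight j) p' q') ∧
    (0 < p → ∃ i, IsRace (G.moveLeft i) (p - 1) q) ∧
    (0 < q → ∃ j, IsRace (G.moveRight j) p (q - 1)) := by
  cases G; rfl

theorem isRace_zero : IsRace 0 0 0 :=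
  ⟨fun i => i.elim, fun j => j.elim, by omega, by omega⟩

/-- `W i`: the opponent, moving first after the move `i`, wins. -/
theorem wins_iff_of_raceStep {ι : Type*} {a b : ℕ} {W : ι → Prop}
    (step : ∀ i, ∃ a' b', RaceStep a b a' b' ∧ (W i ↔ b' ≤ a'))
    (spend : 0 < a → ∃ i, (W i ↔ b ≤ a - 1)) :
    (IsEmpty ι ∨ ∃ i, ¬W i) ↔ a ≤ b := by
  constructor
  · rintro (hι | ⟨i, hi⟩)
    · by_contra! hab
      obtain ⟨i, -⟩ := spend (by omega)
      exact hι.false i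
    · obtain ⟨a', b', hstep, hW⟩ := step i
      unfold RaceStep at hstep
      rw [hW] at hi
      omega
  · intro hab
    rcases Nat.eq_zero_or_pos a with rfl | ha
    · obtain hι | ⟨⟨i⟩⟩ := isEmpty_or_nonempty ι
      · exact Or.inl hι
      refine Or.inr ⟨i, ?_⟩
      obtain ⟨a', b', hstep, hW⟩ := step i
      unfold RaceStep at hstep
      rw [hW]
      omega
    · obtain ⟨i, hW⟩ := spend ha
      exact Or.inr ⟨i, by rw [hW]; omega⟩

theorem IsRace.winsGF_iff {G : PGame} {p q : ℕ} (h : IsRace G p q) :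
    (LeftWinsGF G ↔ p ≤ q) ∧ (RightWinsGF G ↔ q ≤ p) := by
  induction G generalizing p q with
  | mk xl xr xL xR ihL ihR =>
    obtain ⟨hL, hR, hp, hq⟩ := h
    constructor
    · rw [leftWinsGF_iff]
      refine wins_iff_of_raceStep (fun i => ?_) fun hpos => ?_
      · obtain ⟨p', q', hstep, hi⟩ := hL i
        exact ⟨p', q', hstep, (ihL i hi).2⟩
      · obtain ⟨i, hi⟩ := hp hpos
        exact ⟨i, (ihL i hi).2⟩
    · rw [rightWinsGF_iff]
      refine wins_iff_of_raceStep (fun j => ?_) fun hpos => ?_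
      · obtain ⟨p', q', hstep, hj⟩ := hR j
        exact ⟨q', p', hstep, (ihR j hj).1⟩
      · obtain ⟨j, hj⟩ := hq hpos
        exact ⟨j, (ihR j hj).1⟩

theorem IsRace.outcome_eq {G : PGame} {p q : ℕ} (h : IsRace G p q) :
    (p < q → outcome G = .L) ∧ (p = q → outcome G = .N) ∧ (q < p → outcome G = .R) := by
  obtain ⟨hLeft, hRight⟩ := h.winsGF_iff
  refine ⟨fun hpq => ?_, fun hpq => ?_, fun hpq => ?_⟩ <;>
    simp only [outcome, hLeft, hRight] <;> split_ifs <;> first | rfl | omega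

theorem IsRace.add {G H : PGame} {p₁ q₁ p₂ q₂ : ℕ} (hG : IsRace G p₁ q₁)
    (hH : IsRace H p₂ q₂) : IsRace (G + H) (p₁ + p₂) (q₁ + q₂) := by
  induction G generalizing H p₁ q₁ p₂ q₂ with
  | mk xl xr xL xR ihxL ihxR =>
  induction H generalizing p₂ q₂ with
  | mk yl yr yL yR ihyL ihyR =>
  obtain ⟨hGL, hGR, hGp, hGq⟩ := hG
  obtain ⟨hHL, hHR, hHp, hHq⟩ := id hH
  refine isRace_iff.2 ⟨?_, ?_, fun hp => ?_, fun hq => ?_⟩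
  · rintro (i | i)
    · obtain ⟨p', q', hstep, hi⟩ := hGL i
      exact ⟨_, _, hstep.add_right p₂ q₂, ihxL i hi hH⟩
    · obtain ⟨p', q', hstep, hi⟩ := hHL i
      exact ⟨_, _, hstep.add_left p₁ q₁, ihyL i hi⟩
  · rintro (j | j)
    · obtain ⟨p', q', hstep, hj⟩ := hGR j
      exact ⟨_, _, hstep.add_right q₂ p₂, ihxR j hj hH⟩
    · obtain ⟨p', q', hstep, hj⟩ := hHR j
      exact ⟨_, _, hstep.add_left q₁ p₁, ihyR j hj⟩
  · rcases Nat.eq_zero_or_pos p₁ with rfl | hp₁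
    · obtain ⟨i, hi⟩ := hHp (by omega)
      refine ⟨Sum.inr i, ?_⟩
      rw [Nat.zero_add, ← Nat.zero_add (p₂ - 1)]
      exact ihyL i hi
    · obtain ⟨i, hi⟩ := hGp hp₁
      refine ⟨Sum.inl i, ?_⟩
      rw [show p₁ + p₂ - 1 = p₁ - 1 + p₂ by omega]
      exact ihxL i hi hH
  · rcases Nat.eq_zero_or_pos q₁ with rfl | hq₁
    · obtain ⟨j, hj⟩ := hHq (by omega)
      refine ⟨Sum.inr j, ?_⟩
      rw [Nat.zero_add, ← Nat.zero_add (q₂ - 1)]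
      exact ihyR j hj
    · obtain ⟨j, hj⟩ := hGq hq₁
      refine ⟨Sum.inl j, ?_⟩
      rw [show q₁ + q₂ - 1 = q₁ - 1 + q₂ by omega]
      exact ihxR j hj hH

theorem IsRace.neg {G : PGame} {p q : ℕ} (h : IsRace G p q) : IsRace (-G) q p := by
  induction G generalizing p q with
  | mk xl xr xL xR ihL ihR =>
    obtain ⟨hL, hR, hp, hq⟩ := h
    refine isRace_iff.2 ⟨fun j => ?_, fun i => ?_, fun hpos => ?_, fun hpos => ?_⟩
    · obtain ⟨p', q', hstep, hj⟩ := hR j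
      exact ⟨q', p', hstep, ihR j hj⟩
    · obtain ⟨p', q', hstep, hi⟩ := hL i
      exact ⟨q', p', hstep, ihL i hi⟩
    · obtain ⟨j, hj⟩ := hq hpos
      exact ⟨j, ihR j hj⟩
    · obtain ⟨i, hi⟩ := hp hpos
      exact ⟨i, ihL i hi⟩

def dyadicLeftLength : ℤ → ℕ → ℕ
  | m, 0 => m.toNat
  | m, j + 1 =>
      if m % 2 = 0 then dyadicLeftLength (m / 2) j else dyadicLeftLength ((m - 1) / 2) j + 1

theorem one_le_dyadicLeftLength (j : ℕ) {m : ℤ} (hm : 0 < m) : 1 ≤ dyadicLeftLength m j := by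
  induction j generalizing m with
  | zero => simp only [dyadicLeftLength]; omega
  | succ j ih =>
    unfold dyadicLeftLength
    split_ifs
    · exact ih (by omega)
    · omega

theorem dyadicLeftLength_add_one_le (j : ℕ) {m : ℤ} (hm : 0 ≤ m) :
    dyadicLeftLength (m + 1) j ≤ dyadicLeftLength m j + 1 := by
  induction j generalizing m with
  | zero => simp only [dyadicLeftLength]; omega
  | succ j ih =>
    unfold dyadicLeftLength
    by_cases h2 : m % 2 = 0
    · rw [if_neg (by omega), if_pos h2, show (m + 1 - 1) / 2 = m / 2 by omega]
    · rw [if_pos (by omega), if_neg h2, show (m + 1) / 2 = (m - 1) / 2 + 1 by omega]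
      have := ih (m := (m - 1) / 2) (by omega)
      omega

theorem isRace_natGame (n : ℕ) : IsRace (natGame n) n 0 := by
  induction n with
  | zero => exact isRace_zero
  | succ n ih =>
    refine isRace_iff.2 ⟨fun _ => ⟨n, 0, Or.inl ⟨rfl, rfl⟩, ih⟩, fun j => j.elim,
      fun _ => ⟨PUnit.unit, ih⟩, by omega⟩

theorem isRace_dyadicGame (j : ℕ) {m : ℤ} (hm : 0 ≤ m) :
    IsRace (dyadicGame m j) (dyadicLeftLength m j) 0 := by
  induction j generalizing m with
  | zero =>
    rw [dyadicGame, intGame, if_pos hm, dyadicLeftLength]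
    exact isRace_natGame _
  | succ j ih =>
    unfold dyadicGame dyadicLeftLength
    split_ifs with h2
    · exact ih (by omega)
    · have hR : 1 ≤ dyadicLeftLength ((m + 1) / 2) j := one_le_dyadicLeftLength j (by omega)
      have hRL : dyadicLeftLength ((m + 1) / 2) j ≤ dyadicLeftLength ((m - 1) / 2) j + 1 := by
        rw [show (m + 1) / 2 = (m - 1) / 2 + 1 by omega]
        exact dyadicLeftLength_add_one_le j (by omega)
      exact isRace_iff.2 ⟨fun _ => ⟨_, 0, Or.inl ⟨rfl, rfl⟩, ih (by omega)⟩,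
        fun _ => ⟨_, 0, Or.inr ⟨rfl, hR, hRL⟩, ih (by omega)⟩,
        fun _ => ⟨PUnit.unit, ih (by omega)⟩, by omega⟩

theorem dyadicGame_of_nonpos (j : ℕ) {m : ℤ} (hm : m ≤ 0) :
    dyadicGame m j = -dyadicGame (-m) j := by
  induction j generalizing m with
  | zero =>
    rcases hm.lt_or_eq with hm | rfl
    · rw [dyadicGame, dyadicGame, intGame, intGame, if_neg (by omega), if_pos (by omega)]
    · rw [neg_zero, dyadicGame, intGame, if_pos le_rfl]
      exact PGame.neg_zero.symm
  | succ j ih =>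
    unfold dyadicGame
    by_cases h2 : m % 2 = 0
    · rw [if_pos h2, if_pos (by omega), ih (by omega), show -m / 2 = -(m / 2) by omega]
    · rw [if_neg h2, if_neg (by omega), neg_mk, ih (m := (m - 1) / 2) (by omega),
        ih (m := (m + 1) / 2) (by omega), show (-m + 1) / 2 = -((m - 1) / 2) by omega,
        show (-m - 1) / 2 = -((m + 1) / 2) by omega]

theorem leftChain_mk_punit_iff {r : Type u} {x : PGame.{u}} {R : r → PGame.{u}} {n : ℕ} :
    LeftChain (mk PUnit r (fun _ => x) R) n ↔ ∃ k, n = k + 1 ∧ LeftChain x k := by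
  constructor
  · intro h
    cases h with
    | zero _ hl _ => exact (hl.false PUnit.unit).elim
    | succ _ _ k h => exact ⟨k, rfl, h⟩
  · rintro ⟨k, rfl, h⟩
    exact .succ _ (by exact PUnit.unit) k h

theorem leftChain_natGame_iff (k : ℕ) {n : ℕ} : LeftChain (natGame k) n ↔ n = k := by
  induction k generalizing n with
  | zero =>
    constructor
    · intro h
      cases h with
      | zero => rfl
      | succ _ i => exact i.elim
    · rintro rfl
      exact .zero _ ⟨PEmpty.elim⟩ ⟨PEmpty.elim⟩
  | succ k ih =>
    rw [natGame, leftChain_mk_punit_iff]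
    simp only [ih, exists_eq_right]

theorem leftChain_dyadicGame_iff (j : ℕ) {m : ℤ} (hm : 0 ≤ m) {n : ℕ} :
    LeftChain (dyadicGame m j) n ↔ n = dyadicLeftLength m j := by
  induction j generalizing m n with
  | zero =>
    rw [dyadicGame, intGame, if_pos hm, dyadicLeftLength]
    exact leftChain_natGame_iff _
  | succ j ih =>
    unfold dyadicGame dyadicLeftLength
    split_ifs
    · exact ih (by omega)
    · rw [leftChain_mk_punit_iff]
      simp only [ih (m := (m - 1) / 2) (by omega), exists_eq_right]

theorem leftLength_dyadicGame (j : ℕ) {m : ℤ} (hm : 0 ≤ m) :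
    leftLength (dyadicGame m j) = dyadicLeftLength m j := by
  simp only [leftLength, leftChain_dyadicGame_iff j hm, Set.ofPred_eq_eq_singleton,
    csInf_singleton]

theorem rightChain_neg_iff {G : PGame} {n : ℕ} : RightChain (-G) n ↔ LeftChain G n := by
  induction G generalizing n with
  | mk xl xr xL xR ih =>
    rw [neg_mk]
    constructor
    · intro h
      cases h with
      | zero _ hl hr => exact .zero _ hr hl
      | succ _ i k h => exact LeftChain.succ (mk xl xr xL xR) i k (ih i |>.1 h)
    · intro h
      cases h with
      | zero _ hl hr => exact .zero _ hr hl
      | succ _ i k h => exact RightChain.succ (-mk xl xr xL xR) i k (ih i |>.2 h)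

theorem rightLength_neg (G : PGame) : rightLength (-G) = leftLength G := by
  simp only [rightLength, leftLength, rightChain_neg_iff]

theorem rightLength_dyadicGame (j : ℕ) {m : ℤ} (hm : m ≤ 0) :
    rightLength (dyadicGame m j) = dyadicLeftLength (-m) j := by
  rw [dyadicGame_of_nonpos j hm, rightLength_neg, leftLength_dyadicGame j (by omega)]

theorem isRace_dyadicGame_of_nonpos (j : ℕ) {m : ℤ} (hm : m ≤ 0) :
    IsRace (dyadicGame m j) 0 (dyadicLeftLength (-m) j) := by
  rw [dyadicGame_of_nonpos j hm]
  exact (isRace_dyadicGame j (by omega)).neg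

theorem isRace_list_sum {ι : Type*} (l : List ι) (f : ι → PGame) (p q : ι → ℕ)
    (h : ∀ i ∈ l, IsRace (f i) (p i) (q i)) :
    IsRace (l.map f).sum (l.map p).sum (l.map q).sum := by
  induction l with
  | nil => exact isRace_zero
  | cons i l ih =>
    simp only [List.map_cons, List.sum_cons]
    exact (h i List.mem_cons_self).add (ih fun i hi => h i (List.mem_cons_of_mem _ hi))

end Misere

open Misere SetTheory PGame

/-- the misère outcome of a sum of positive and negative canonical-form
dyadic rationals is determined by k = Σ l(aᵢ) − Σ r(bᵢ). -/
theorem stmt13 (as bs : List (ℤ × ℕ))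
    (ha : ∀ p ∈ as, 0 < p.1) (hb : ∀ p ∈ bs, p.1 < 0) :
    let G := (as.map fun p => dyadicGame p.1 p.2).sum +
             (bs.map fun p => dyadicGame p.1 p.2).sum
    let k : ℤ := (as.map fun p => (leftLength (dyadicGame p.1 p.2) : ℤ)).sum -
                 (bs.map fun p => (rightLength (dyadicGame p.1 p.2) : ℤ)).sum
    (k < 0 → outcome G = MOutcome.L) ∧
    (k = 0 → outcome G = MOutcome.N) ∧
    (0 < k → outcome G = MOutcome.R) := by
  intro G k
  have hpos := isRace_list_sum as (fun p => dyadicGame p.1 p.2)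
    (fun p => dyadicLeftLength p.1 p.2) (fun _ => 0)
    fun p hp => isRace_dyadicGame p.2 (ha p hp).le
  have hneg := isRace_list_sum bs (fun p => dyadicGame p.1 p.2) (fun _ => 0)
    (fun p => dyadicLeftLength (-p.1) p.2)
    fun p hp => isRace_dyadicGame_of_nonpos p.2 (hb p hp).le
  obtain ⟨hL, hN, hR⟩ := (hpos.add hneg).outcome_eq
  simp only [List.map_const', List.sum_replicate, smul_zero, add_zero, zero_add] at hL hN hR
  have hk : k = ((as.map fun p => dyadicLeftLength p.1 p.2).sum : ℤ) -
      ((bs.map fun p => dyadicLeftLength (-p.1) p.2).sum : ℤ) := by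
    simp only [k, Nat.cast_list_sum, List.map_map]
    congr 2 <;> refine List.map_congr_left fun p hp => ?_
    · simp only [Function.comp_apply, leftLength_dyadicGame p.2 (ha p hp).le]
    · simp only [Function.comp_apply, rightLength_dyadicGame p.2 (hb p hp).le]
  exact ⟨fun h => hL (by omega), fun h => hN (by omega), fun h => hR (by omega)⟩
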